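/- Over the sequent calculus ML (intuitionistic sequent calculus LJ with the rule weakening-right removed), adding as initial sequents ⇒ ¬A → (A → B) for all formulas A, B yields a system that derives exactly the same sequents as ML plus the weakening-right rule. -/
import Mathlib


/-- First-order terms: variables and constants. -/
inductive Tm : Type
  | var : ℕ → Tm
  | const : ℕ → Tm
deriving DecidableEq

/-- First-order formulas (negation primitive, as in LJ). -/
inductive Fml : Type
  | atom : ℕ → List Tm → Fml
  | and : Fml → Fml → Fml
  | or : Fml → Fml → Fml
  | imp : Fml → Fml → Fml
  | neg : Fml → Fml
  | all : ℕ → Fml → Fml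
  | ex : ℕ → Fml → Fml

/-- Substitute term `t` for variable `x` in a term. -/
def Tm.subst (x : ℕ) (t : Tm) : Tm → Tm
  | .var y => if y = x then t else .var y
  | .const c => .const c

/-- Substitute term `t` for the free occurrences of variable `x`. -/
def Fml.subst (x : ℕ) (t : Tm) : Fml → Fml
  | .atom p ts => .atom p (ts.map (Tm.subst x t))
  | .and A B => .and (A.subst x t) (B.subst x t)
  | .or A B => .or (A.subst x t) (B.subst x t)
  | .imp A B => .imp (A.subst x t) (B.subst x t)
  | .neg A => .neg (A.subst x t)
  | .all y A => if y = x then .all y A else .all y (A.subst x t)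
  | .ex y A => if y = x then .ex y A else .ex y (A.subst x t)

def Tm.freeIn (x : ℕ) : Tm → Prop
  | .var y => y = x
  | .const _ => False

/-- `x` occurs free in a formula. -/
def Fml.freeIn (x : ℕ) : Fml → Prop
  | .atom _ ts => ∃ s ∈ ts, s.freeIn x
  | .and A B => A.freeIn x ∨ B.freeIn x
  | .or A B => A.freeIn x ∨ B.freeIn x
  | .imp A B => A.freeIn x ∨ B.freeIn x
  | .neg A => A.freeIn x
  | .all y A => y ≠ x ∧ A.freeIn x
  | .ex y A => y ≠ x ∧ A.freeIn x

/-- Which optional rules a sequent-calculus system has: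
`cutOK C` says cuts on formula `C` are allowed, `wr` is weakening-right,
`tnd` is the tertium-non-datur rule, and `efq` is the family of initial
sequents `⇒ ¬A → (A → B)`. -/
structure Rules where
  cutOK : Fml → Prop
  wr : Prop
  tnd : Prop
  efq : Prop

/-- Derivability of a single-succedent sequent `Γ ⇒ Δ` (with `Δ` at most one
formula) in LJ-style sequent calculus without weakening-right, with the
optional rules given by `R`.  -/
inductive Deriv (R : Rules) : List Fml → Option Fml → Prop
  -- initial sequents
  | id (A : Fml) : Deriv R [A] (some A)
  | efq (h : R.efq) (A B : Fml) :
      Deriv R [] (some ((A.neg).imp (A.imp B)))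
  -- structural rules
  | xchg {Γ₁ Γ₂ : List Fml} {A B : Fml} {Δ : Option Fml} :
      Deriv R (Γ₁ ++ A :: B :: Γ₂) Δ → Deriv R (Γ₁ ++ B :: A :: Γ₂) Δ
  | contr {Γ : List Fml} {A : Fml} {Δ : Option Fml} :
      Deriv R (A :: A :: Γ) Δ → Deriv R (A :: Γ) Δ
  | wl {Γ : List Fml} {Δ : Option Fml} (A : Fml) :
      Deriv R Γ Δ → Deriv R (A :: Γ) Δ
  | wr (h : R.wr) {Γ : List Fml} (A : Fml) :
      Deriv R Γ none → Deriv R Γ (some A)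
  | cut {Γ Θ : List Fml} {A : Fml} {Δ : Option Fml} (h : R.cutOK A) :
      Deriv R Γ (some A) → Deriv R (A :: Θ) Δ → Deriv R (Γ ++ Θ) Δ
  -- tertium non datur rule
  | tnd (h : R.tnd) {Γ : List Fml} {A : Fml} {Δ : Option Fml} :
      Deriv R (A :: Γ) Δ → Deriv R (A.neg :: Γ) Δ → Deriv R Γ Δ
  -- logical rules
  | andL₁ {Γ : List Fml} {A B : Fml} {Δ : Option Fml} :
      Deriv R (A :: Γ) Δ → Deriv R (A.and B :: Γ) Δ
  | andL₂ {Γ : List Fml} {A B : Fml} {Δ : Option Fml} :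
      Deriv R (B :: Γ) Δ → Deriv R (A.and B :: Γ) Δ
  | andR {Γ : List Fml} {A B : Fml} :
      Deriv R Γ (some A) → Deriv R Γ (some B) → Deriv R Γ (some (A.and B))
  | orL {Γ : List Fml} {A B : Fml} {Δ : Option Fml} :
      Deriv R (A :: Γ) Δ → Deriv R (B :: Γ) Δ → Deriv R (A.or B :: Γ) Δ
  | orR₁ {Γ : List Fml} {A B : Fml} :
      Deriv R Γ (some A) → Deriv R Γ (some (A.or B))
  | orR₂ {Γ : List Fml} {A B : Fml} :
      Deriv R Γ (some B) → Deriv R Γ (some (A.or B))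
  | impL {Γ Θ : List Fml} {A B : Fml} {Δ : Option Fml} :
      Deriv R Γ (some A) → Deriv R (B :: Θ) Δ →
      Deriv R (A.imp B :: Γ ++ Θ) Δ
  | impR {Γ : List Fml} {A B : Fml} :
      Deriv R (A :: Γ) (some B) → Deriv R Γ (some (A.imp B))
  | negL {Γ : List Fml} {A : Fml} :
      Deriv R Γ (some A) → Deriv R (A.neg :: Γ) none
  | negR {Γ : List Fml} {A : Fml} :
      Deriv R (A :: Γ) none → Deriv R Γ (some A.neg)
  | allL {Γ : List Fml} {x : ℕ} {A : Fml} {Δ : Option Fml} (t : Tm) :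
      Deriv R (A.subst x t :: Γ) Δ → Deriv R (Fml.all x A :: Γ) Δ
  | allR {Γ : List Fml} {x : ℕ} {A : Fml} (a : ℕ)
      (hΓ : ∀ F ∈ Γ, ¬ F.freeIn a) (hA : ¬ (Fml.all x A).freeIn a) :
      Deriv R Γ (some (A.subst x (Tm.var a))) → Deriv R Γ (some (Fml.all x A))
  | exL {Γ : List Fml} {x : ℕ} {A : Fml} {Δ : Option Fml} (a : ℕ)
      (hΓ : ∀ F ∈ Γ, ¬ F.freeIn a) (hA : ¬ (Fml.ex x A).freeIn a)
      (hΔ : ∀ F, Δ = some F → ¬ F.freeIn a) :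
      Deriv R (A.subst x (Tm.var a) :: Γ) Δ → Deriv R (Fml.ex x A :: Γ) Δ
  | exR {Γ : List Fml} {x : ℕ} {A : Fml} (t : Tm) :
      Deriv R Γ (some (A.subst x t)) → Deriv R Γ (some (Fml.ex x A))

/-- ML: LJ without weakening-right (cut allowed on any formula). -/
def ML : Rules := ⟨fun _ => True, False, False, False⟩

/-- Cut-free ML. -/
def MLcf : Rules := ⟨fun _ => False, False, False, False⟩

/-- ML⁺: ML plus the tertium-non-datur rule. -/
def MLplus : Rules := ⟨fun _ => True, False, True, False⟩

/-- Cut-free ML⁺. -/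
def MLplusCF : Rules := ⟨fun _ => False, False, True, False⟩

/-- ML plus the initial sequents ⇒ ¬A → (A → B). -/
def MLefq : Rules := ⟨fun _ => True, False, False, True⟩

/-- ML plus the weakening-right rule. -/
def MLwr : Rules := ⟨fun _ => True, True, False, False⟩

/-- Generic monotonicity: translate derivations between rule sets, with the
`efq` initial sequents and the `wr` rule handled abstractly. -/
lemma Deriv.mono {R R' : Rules}
    (hcut : ∀ A, R.cutOK A → R'.cutOK A)
    (htnd : R.tnd → R'.tnd)
    (hefq : R.efq → ∀ A B : Fml, Deriv R' [] (some ((A.neg).imp (A.imp B))))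
    (hwr : R.wr → ∀ (Γ : List Fml) (A : Fml), Deriv R' Γ none → Deriv R' Γ (some A))
    {Γ : List Fml} {Δ : Option Fml} (d : Deriv R Γ Δ) : Deriv R' Γ Δ := by
  induction d with
  | id A => exact .id A
  | efq h A B => exact hefq h A B
  | xchg _ ih => exact .xchg ih
  | contr _ ih => exact .contr ih
  | wl A _ ih => exact .wl A ih
  | wr h A _ ih => exact hwr h _ A ih
  | cut h _ _ ih₁ ih₂ => exact .cut (hcut _ h) ih₁ ih₂
  | tnd h _ _ ih₁ ih₂ => exact .tnd (htnd h) ih₁ ih₂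
  | andL₁ _ ih => exact .andL₁ ih
  | andL₂ _ ih => exact .andL₂ ih
  | andR _ _ ih₁ ih₂ => exact .andR ih₁ ih₂
  | orL _ _ ih₁ ih₂ => exact .orL ih₁ ih₂
  | orR₁ _ ih => exact .orR₁ ih
  | orR₂ _ ih => exact .orR₂ ih
  | impL _ _ ih₁ ih₂ => exact .impL ih₁ ih₂
  | impR _ ih => exact .impR ih
  | negL _ ih => exact .negL ih
  | negR _ ih => exact .negR ih
  | allL t _ ih => exact .allL t ih
  | allR a hΓ hA _ ih => exact .allR a hΓ hA ih
  | exL a hΓ hA hΔ _ ih => exact .exL a hΓ hA hΔ ih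
  | exR t _ ih => exact .exR t ih

/-- Derivability is invariant under permutation of the antecedent. -/
lemma Deriv.perm_aux {R : Rules} {Δ : Option Fml} {l₁ l₂ : List Fml}
    (p : l₁.Perm l₂) : ∀ Γ, Deriv R (Γ ++ l₁) Δ → Deriv R (Γ ++ l₂) Δ := by
  induction p with
  | nil => exact fun _ h => h
  | cons x p ih =>
      intro Γ h
      have := ih (Γ ++ [x]) (by simpa using h)
      simpa using this
  | swap x y l => intro Γ h; exact h.xchg
  | trans p q ih₁ ih₂ => intro Γ h; exact ih₂ Γ (ih₁ Γ h)

lemma Deriv.perm {R : Rules} {Δ : Option Fml} {l₁ l₂ : List Fml}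
    (p : l₁.Perm l₂) (h : Deriv R l₁ Δ) : Deriv R l₂ Δ := by
  simpa using Deriv.perm_aux p [] (by simpa using h)

/-- Contract a duplicated block of the antecedent. -/
lemma Deriv.contr_append {R : Rules} {Δ : Option Fml} :
    ∀ (Γ Θ : List Fml), Deriv R (Γ ++ Γ ++ Θ) Δ → Deriv R (Γ ++ Θ) Δ := by
  intro Γ
  induction Γ with
  | nil => intro Θ h; simpa using h
  | cons A Γ ih =>
      intro Θ h
      have p₁ : ((A :: Γ) ++ (A :: Γ) ++ Θ).Perm (A :: A :: (Γ ++ Γ ++ Θ)) := by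
        simp only [List.cons_append, List.append_assoc]
        exact List.perm_middle.cons A
      have h₂ : Deriv R (A :: (Γ ++ Γ ++ Θ)) Δ := .contr (h.perm p₁)
      have p₂ : (A :: (Γ ++ Γ ++ Θ)).Perm (Γ ++ Γ ++ (A :: Θ)) :=
        List.perm_middle.symm
      have h₃ := ih (A :: Θ) (h₂.perm p₂)
      exact h₃.perm (by simp [List.perm_middle])

/-- Weakening-right is admissible in ML + efq initial sequents. -/
lemma MLefq_wr {Γ : List Fml} (B : Fml) (h : Deriv MLefq Γ none) :
    Deriv MLefq Γ (some B) := by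
  set P : Fml := Fml.atom 0 []
  have hnP : Deriv MLefq Γ (some P.neg) := .negR (.wl P h)
  have hnnP : Deriv MLefq Γ (some P.neg.neg) := .negR (.wl P.neg h)
  have d2 : Deriv MLefq ((P.neg.imp B) :: Γ ++ []) (some B) := .impL hnP (.id B)
  have d3 : Deriv MLefq ((P.neg.neg.imp (P.neg.imp B)) :: Γ ++ (Γ ++ [])) (some B) :=
    .impL hnnP d2
  have defq : Deriv MLefq [] (some (P.neg.neg.imp (P.neg.imp B))) := .efq trivial P.neg B
  have d4 : Deriv MLefq ([] ++ (Γ ++ (Γ ++ []))) (some B) := .cut trivial defq d3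
  have d5 : Deriv MLefq (Γ ++ Γ ++ []) (some B) := by simpa using d4
  simpa using Deriv.contr_append Γ [] d5

/-- ML plus the initial sequents ⇒ ¬A → (A → B) derives exactly
the same sequents as ML plus the weakening-right rule. -/
theorem efq_initials_iff_weakening_right (Γ : List Fml) (Δ : Option Fml) :
    Deriv MLefq Γ Δ ↔ Deriv MLwr Γ Δ := by
  constructor
  · intro d
    refine d.mono (R := MLefq) (R' := MLwr) (fun _ h => h) (fun (h : False) => h.elim) ?_ (fun (h : False) => h.elim)
    intro _ A B
    refine .impR (.impR ?_)
    refine Deriv.xchg (Γ₁ := []) ?_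
    exact .wr trivial B (.negL (.id A))
  · intro d
    refine d.mono (R := MLwr) (R' := MLefq) (fun _ h => h) (fun (h : False) => h.elim) (fun (h : False) => h.elim) ?_
    exact fun _ Γ' A h => MLefq_wr A h
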